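/- Monotonicity of stability regions in prediction ability: for 0 ≤ θ_a < θ_b ≤ 1, the stability region D_{θ_a} is a subset of D_{θ_b}, where D_θ = {c : c = θ·Σ_e p^e·s^e·g^e + (1−θ)·S̄·g for some g^e, g ∈ G}, provided G is convex, Σ_e p^e = 1 with p^e ≥ 0, and S̄ = Σ_e p^e·s^e. -/

import Mathlib

open Matrix

/-! The region `D_θ` is the image of `G^E × G` under `(gᵉ, g) ↦ θ • Φ gᵉ + (1 - θ) • Φ (const g)`,
where `Φ gᵉ = ∑ₑ pᵉ • sᵉ gᵉ` is linear and `Φ (const g) = S̄ g`. Writing `t = θa / θb ∈ [0, 1]`,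
linearity of `Φ` gives
`θa • Φ gᵉ + (1 - θa) • Φ (const g) = θb • Φ (t • gᵉ + (1 - t) • const g) + (1 - θb) • Φ (const g)`,
and by convexity of `G` each component `t • gᵉ + (1 - t) • g` of the new forecast lies in `G`. -/

section MeanMulVec

variable {R m n E : Type*} [CommRing R] [Fintype n] [Fintype E]

def meanMulVec (p : E → R) (s : E → Matrix m n R) : (E → n → R) →ₗ[R] (m → R) :=
  ∑ e, p e • (s e).mulVecLin ∘ₗ LinearMap.proj e

theorem meanMulVec_apply (p : E → R) (s : E → Matrix m n R) (x : E → n → R) :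
    meanMulVec p s x = ∑ e, p e • (s e *ᵥ x e) := by
  simp [meanMulVec]

theorem meanMulVec_const (p : E → R) (s : E → Matrix m n R) (y : n → R) :
    meanMulVec p s (fun _ => y) = (∑ e, p e • s e) *ᵥ y := by
  simp only [meanMulVec_apply, sum_mulVec, smul_mulVec]

end MeanMulVec

theorem smul_add_one_sub_smul_eq_rescale {K V : Type*} [Field K] [AddCommGroup V] [Module K V]
    {a b : K} (hb : b ≠ 0) (x y : V) :
    a • x + (1 - a) • y = b • ((a / b) • x + (1 - a / b) • y) + (1 - b) • y := by
  rw [smul_add, smul_smul, smul_smul, mul_div_cancel₀ a hb, add_assoc, ← add_smul]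
  congr 2
  field_simp
  ring

theorem stability_region_monotone_in_theta_general {n : ℕ} {E : Type} [Fintype E]
    (p : E → ℝ)
    (s : E → Matrix (Fin n) (Fin n) ℝ)
    (G : Set (Fin n → ℝ)) (hG : Convex ℝ G)
    (θa θb : ℝ) (h0 : 0 ≤ θa) (hab : θa < θb) :
    {c : Fin n → ℝ | ∃ (ge : E → Fin n → ℝ) (g : Fin n → ℝ),
        (∀ e, ge e ∈ G) ∧ g ∈ G ∧
        c = θa • ∑ e, p e • (s e *ᵥ ge e) + (1 - θa) • ((∑ e, p e • s e) *ᵥ g)}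
      ⊆
    {c : Fin n → ℝ | ∃ (ge : E → Fin n → ℝ) (g : Fin n → ℝ),
        (∀ e, ge e ∈ G) ∧ g ∈ G ∧
        c = θb • ∑ e, p e • (s e *ᵥ ge e) + (1 - θb) • ((∑ e, p e • s e) *ᵥ g)} := by
  rintro c ⟨ge, g, hge, hg, rfl⟩
  have hb : 0 < θb := h0.trans_lt hab
  set t := θa / θb
  have ht0 : 0 ≤ t := div_nonneg h0 hb.le
  have ht1 : t ≤ 1 := (div_le_one hb).2 hab.le
  refine ⟨t • ge + (1 - t) • fun _ => g, g,
    fun e => hG (hge e) hg ht0 (sub_nonneg.2 ht1) (add_sub_cancel t 1), hg, ?_⟩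
  rw [← meanMulVec_apply, ← meanMulVec_apply, ← meanMulVec_const, map_add, map_smul, map_smul]
  exact smul_add_one_sub_smul_eq_rescale hb.ne' _ _

/-- Monotonicity of stability regions in prediction ability: for `0 ≤ θa < θb ≤ 1`,
`D_{θa} ⊆ D_{θb}`, where
`D_θ = {c : c = θ·Σ_e p^e·s^e·g^e + (1−θ)·S̄·g, g^e, g ∈ G}`, with `G` convex,
`p` a probability vector, the `s^e` nonnegative diagonal matrices, and
`S̄ = Σ_e p^e·s^e`. -/
theorem stability_region_monotone_in_theta {n : ℕ} {E : Type} [Fintype E]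
    (p : E → ℝ) (hp : ∀ e, 0 ≤ p e) (hpsum : ∑ e, p e = 1)
    (s : E → Matrix (Fin n) (Fin n) ℝ)
    (hsdiag : ∀ e i j, i ≠ j → s e i j = 0)
    (hsnn : ∀ e i, 0 ≤ s e i i)
    (G : Set (Fin n → ℝ)) (hG : Convex ℝ G)
    (θa θb : ℝ) (h0 : 0 ≤ θa) (hab : θa < θb) (h1 : θb ≤ 1) :
    {c : Fin n → ℝ | ∃ (ge : E → Fin n → ℝ) (g : Fin n → ℝ),
        (∀ e, ge e ∈ G) ∧ g ∈ G ∧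
        c = θa • ∑ e, p e • (s e *ᵥ ge e) + (1 - θa) • ((∑ e, p e • s e) *ᵥ g)}
      ⊆
    {c : Fin n → ℝ | ∃ (ge : E → Fin n → ℝ) (g : Fin n → ℝ),
        (∀ e, ge e ∈ G) ∧ g ∈ G ∧
        c = θb • ∑ e, p e • (s e *ᵥ ge e) + (1 - θb) • ((∑ e, p e • s e) *ᵥ g)} :=
  stability_region_monotone_in_theta_general p s G hG θa θb h0 hab
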